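/- Let h : ℝ → ℝ be defined by h(u) = (7 + 44u² + 40u⁴)/(3√(1+u²)) − (16/(3π))·( 4/3 + 5u² + u·(3 + 5u²)·arctan(u) ). Then: (a) the double integral ∫_{ℝ²} |r₂ − r₁|^{−3} · ( 1 + ((r₁r₂ + 1)/(r₂ − r₁))² )^{−3/2} dr₁ dr₂ converges and equals ∫_{ℝ²} (1 + r₁²)^{−3/2}·(1 + r₂²)^{−3/2} dr₁ dr₂ = 4; and (b) consequently, for every pair of integers n̂₁, n̂₂ and every y > 0, the integral I(n̂₁, n̂₂; y) = ∫_{ℝ²} |r₂ − r₁|^{−3} · h( (r₁r₂ + 1)/(r₂ − r₁) ) · e^{−2πi(n̂₁·y·r₁ + n̂₂·y·r₂)} dr₁ dr₂ converges absolutely and |I(n̂₁, n̂₂; y)| is bounded uniformly in y > 0 and in n̂₁, n̂₂. -/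

import Mathlib

/-!
Writing `r₁ = tan α`, `r₂ = tan β`, the quantity `u = (r₁r₂ + 1)/(r₂ - r₁)` is `cot (β - α)`, and
`(r₂ - r₁)² (1 + u²) = (1 + r₁²)(1 + r₂²)`. Hence off the diagonal the kernel
`|r₂ - r₁|⁻³ (1 + u²)^(-3/2)` factorises as `(1 + r₁²)^(-3/2) (1 + r₂²)^(-3/2)`, whose integral is
`(∫ (1 + x²)^(-3/2))² = 2²`, an antiderivative being `sin (arctan x) = x / √(1 + x²)`.

For (b), `h` is continuous and `h u = O(|u|⁻³)` at infinity: with `arctan u = π/2 - arctan u⁻¹`, the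
Taylor bounds of `arctan` at `u⁻¹` of orders five and seven show that all terms of order larger
than `u⁻³` cancel. So `|h u| ≤ C (1 + u²)^(-3/2)`, and the integrand of `I` is dominated by `C`
times the factorised kernel, uniformly in `n̂₁, n̂₂, y`.
-/

open Real MeasureTheory

/-- The function `h` from the Poincaré-series solution. -/
noncomputable def hfun (u : ℝ) : ℝ :=
  (7 + 44 * u ^ 2 + 40 * u ^ 4) / (3 * Real.sqrt (1 + u ^ 2)) -
    16 / (3 * π) * (4 / 3 + 5 * u ^ 2 + u * (3 + 5 * u ^ 2) * Real.arctan u)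

/-- The complex integrand of `I(n̂₁, n̂₂; y)`. -/
noncomputable def Iintegrand (n₁ n₂ : ℤ) (y : ℝ) (p : ℝ × ℝ) : ℂ :=
  ((|p.2 - p.1| ^ (-3 : ℤ) * hfun ((p.1 * p.2 + 1) / (p.2 - p.1)) : ℝ) : ℂ) *
    Complex.exp (-2 * π * Complex.I * ((n₁ : ℝ) * y * p.1 + (n₂ : ℝ) * y * p.2))

open Filter

lemma one_add_sq_rpow_neg_three_halves (x : ℝ) :
    (1 + x ^ 2) ^ (-(3 : ℝ) / 2) = ((1 + x ^ 2) * √(1 + x ^ 2))⁻¹ := by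
  have hx : 0 < 1 + x ^ 2 := by positivity
  rw [neg_div, rpow_neg hx.le, show (3 : ℝ) / 2 = 1 + 1 / 2 by norm_num, rpow_add hx,
    rpow_one, sqrt_eq_rpow]

lemma integrable_one_add_sq_rpow_neg_three_halves :
    Integrable fun x : ℝ => (1 + x ^ 2) ^ (-(3 : ℝ) / 2) := by
  simpa only [Real.norm_eq_abs, sq_abs] using
    integrable_rpow_neg_one_add_norm_sq (E := ℝ) (r := 3) (by norm_num)

lemma hasDerivAt_sin_arctan (x : ℝ) :
    HasDerivAt (fun t => sin (arctan t)) ((1 + x ^ 2) ^ (-(3 : ℝ) / 2)) x := by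
  convert (hasDerivAt_arctan x).sin using 1
  rw [cos_arctan, one_add_sq_rpow_neg_three_halves]
  field_simp

lemma integral_one_add_sq_rpow_neg_three_halves :
    ∫ x : ℝ, (1 + x ^ 2) ^ (-(3 : ℝ) / 2) = 2 := by
  rw [integral_of_hasDerivAt_of_tendsto hasDerivAt_sin_arctan
    integrable_one_add_sq_rpow_neg_three_halves
    (tendsto_sin_neg_pi_div_two.comp tendsto_arctan_atBot)
    (tendsto_sin_pi_div_two.comp tendsto_arctan_atTop)]
  norm_num

lemma integrable_one_add_sq_rpow_mul_one_add_sq_rpow :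
    Integrable fun p : ℝ × ℝ =>
      (1 + p.1 ^ 2) ^ (-(3 : ℝ) / 2) * (1 + p.2 ^ 2) ^ (-(3 : ℝ) / 2) :=
  integrable_one_add_sq_rpow_neg_three_halves.mul_prod integrable_one_add_sq_rpow_neg_three_halves

lemma integral_one_add_sq_rpow_mul_one_add_sq_rpow :
    ∫ p : ℝ × ℝ, (1 + p.1 ^ 2) ^ (-(3 : ℝ) / 2) * (1 + p.2 ^ 2) ^ (-(3 : ℝ) / 2) = 4 := by
  rw [Measure.volume_eq_prod, integral_prod_mul (fun x : ℝ => (1 + x ^ 2) ^ (-(3 : ℝ) / 2))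
    (fun x : ℝ => (1 + x ^ 2) ^ (-(3 : ℝ) / 2)), integral_one_add_sq_rpow_neg_three_halves]
  norm_num

lemma abs_zpow_neg_three (d : ℝ) : |d| ^ (-3 : ℤ) = (d ^ 2) ^ (-(3 : ℝ) / 2) := by
  rw [← sq_abs, ← rpow_two, ← rpow_mul (abs_nonneg d)]
  norm_num

lemma sq_mul_one_add_sq_div {r₁ r₂ : ℝ} (h : r₂ - r₁ ≠ 0) :
    (r₂ - r₁) ^ 2 * (1 + ((r₁ * r₂ + 1) / (r₂ - r₁)) ^ 2) = (1 + r₁ ^ 2) * (1 + r₂ ^ 2) := by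
  field_simp
  ring

lemma abs_sub_zpow_mul_rpow_eq {r₁ r₂ : ℝ} (h : r₂ - r₁ ≠ 0) :
    |r₂ - r₁| ^ (-3 : ℤ) * (1 + ((r₁ * r₂ + 1) / (r₂ - r₁)) ^ 2) ^ (-(3 : ℝ) / 2) =
      (1 + r₁ ^ 2) ^ (-(3 : ℝ) / 2) * (1 + r₂ ^ 2) ^ (-(3 : ℝ) / 2) := by
  rw [abs_zpow_neg_three, ← mul_rpow (by positivity) (by positivity), sq_mul_one_add_sq_div h,
    mul_rpow (by positivity) (by positivity)]

lemma ae_sub_ne_zero : ∀ᵐ p : ℝ × ℝ, p.2 - p.1 ≠ 0 :=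
  (Measure.ae_prod_iff_ae_ae
      ((measurable_snd.sub measurable_fst) (measurableSet_singleton 0).compl)).2
    (Eventually.of_forall fun x => by simpa [sub_eq_zero] using Measure.ae_ne volume x)

lemma arctan_le_taylor_five {x : ℝ} (hx : 0 ≤ x) : arctan x ≤ x - x ^ 3 / 3 + x ^ 5 / 5 := by
  have hmono : Monotone fun t => t - t ^ 3 / 3 + t ^ 5 / 5 - arctan t := by
    refine monotone_of_hasDerivAt_nonneg (f' := fun t => 1 - t ^ 2 + t ^ 4 - (1 + t ^ 2)⁻¹)
      (fun t => ?_) (fun t => ?_)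
    · refine ((((hasDerivAt_id' t).sub ((hasDerivAt_pow 3 t).div_const 3)).add
        ((hasDerivAt_pow 5 t).div_const 5)).sub (hasDerivAt_arctan' t)).congr_deriv ?_
      norm_num
    · -- `(1 - t² + t⁴) (1 + t²) = 1 + t⁶`
      simp only [Pi.zero_apply]
      rw [sub_nonneg, inv_le_iff_one_le_mul₀ (by positivity)]
      nlinarith [pow_two_nonneg (t ^ 3)]
  simpa using hmono hx

lemma taylor_seven_le_arctan {x : ℝ} (hx : 0 ≤ x) :
    x - x ^ 3 / 3 + x ^ 5 / 5 - x ^ 7 / 7 ≤ arctan x := by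
  have hmono : Monotone fun t => arctan t - (t - t ^ 3 / 3 + t ^ 5 / 5 - t ^ 7 / 7) := by
    refine monotone_of_hasDerivAt_nonneg
      (f' := fun t => (1 + t ^ 2)⁻¹ - (1 - t ^ 2 + t ^ 4 - t ^ 6)) (fun t => ?_) (fun t => ?_)
    · refine ((hasDerivAt_arctan' t).sub ((((hasDerivAt_id' t).sub
        ((hasDerivAt_pow 3 t).div_const 3)).add ((hasDerivAt_pow 5 t).div_const 5)).sub
        ((hasDerivAt_pow 7 t).div_const 7))).congr_deriv ?_
      norm_num
    · -- `(1 - t² + t⁴ - t⁶) (1 + t²) = 1 - t⁸`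
      simp only [Pi.zero_apply]
      rw [sub_nonneg, ← one_div, le_div_iff₀ (by positivity)]
      nlinarith [pow_two_nonneg (t ^ 4)]
  simpa using hmono hx

lemma hfun_neg (u : ℝ) : hfun (-u) = hfun u := by
  simp only [hfun, arctan_neg]
  ring_nf

lemma continuous_hfun : Continuous hfun := by
  unfold hfun
  fun_prop (disch := intro; positivity)

lemma hfun_eq_of_pos {u : ℝ} (hu : 0 < u) :
    hfun u = ((7 + 44 * u ^ 2 + 40 * u ^ 4) / (3 * √(1 + u ^ 2)) - (8 * u + 40 / 3 * u ^ 3)) +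
      16 / (3 * π) * ((3 * u + 5 * u ^ 3) * arctan u⁻¹ - (4 / 3 + 5 * u ^ 2)) := by
  rw [hfun, arctan_inv_of_pos hu]
  field_simp
  ring

lemma abs_hfun_sqrt_part_le {u : ℝ} (hu : 1 ≤ u) :
    |(7 + 44 * u ^ 2 + 40 * u ^ 4) / (3 * √(1 + u ^ 2)) - (8 * u + 40 / 3 * u ^ 3)| ≤
      1 / u ^ 3 := by
  have hs : √(1 + u ^ 2) ^ 2 = 1 + u ^ 2 := sq_sqrt (by positivity)
  have hsu : u ≤ √(1 + u ^ 2) := le_sqrt_of_sq_le (by linarith)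
  set s := √(1 + u ^ 2)
  have hs0 : 0 < s := by linarith
  -- rationalise, using `(7 + 44u² + 40u⁴)² - (24u + 40u³)² (1 + u²) = 40u² + 49`
  have hq : (7 + 44 * u ^ 2 + 40 * u ^ 4) / (3 * s) - (8 * u + 40 / 3 * u ^ 3) =
      (40 * u ^ 2 + 49) / (3 * s * (7 + 44 * u ^ 2 + 40 * u ^ 4 + (24 * u + 40 * u ^ 3) * s)) := by
    rw [div_sub' (by positivity), div_eq_div_iff (by positivity) (by positivity)]
    linear_combination (-3 * s * (24 * u + 40 * u ^ 3) ^ 2) * hs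
  have hden :
      240 * u ^ 5 ≤ 3 * s * (7 + 44 * u ^ 2 + 40 * u ^ 4 + (24 * u + 40 * u ^ 3) * s) := by
    have : 80 * u ^ 4 ≤ 7 + 44 * u ^ 2 + 40 * u ^ 4 + (24 * u + 40 * u ^ 3) * s := by
      nlinarith [mul_le_mul_of_nonneg_left hsu (by positivity : (0 : ℝ) ≤ 40 * u ^ 3)]
    nlinarith [mul_le_mul hsu this (by positivity) hs0.le]
  rw [hq, abs_of_nonneg (by positivity), div_le_div_iff₀ (by positivity) (by positivity)]
  nlinarith [pow_le_pow_left₀ zero_le_one hu 2, pow_pos (by linarith : (0 : ℝ) < u) 3]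

lemma abs_hfun_arctan_part_le {u : ℝ} (hu : 1 ≤ u) :
    |(3 * u + 5 * u ^ 3) * arctan u⁻¹ - (4 / 3 + 5 * u ^ 2)| ≤ 1 / u ^ 3 := by
  have hu0 : 0 < u := by linarith
  have hv : 0 ≤ u⁻¹ := by positivity
  have hc : 0 ≤ 3 * u + 5 * u ^ 3 := by positivity
  have hupper := mul_le_mul_of_nonneg_left (arctan_le_taylor_five hv) hc
  have hlower := mul_le_mul_of_nonneg_left (taylor_seven_le_arctan hv) hc
  have hupper_eq : (3 * u + 5 * u ^ 3) * (u⁻¹ - u⁻¹ ^ 3 / 3 + u⁻¹ ^ 5 / 5) =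
      4 / 3 + 5 * u ^ 2 + 3 / 5 * (1 / u ^ 4) := by
    field_simp; ring
  have hlower_eq : (3 * u + 5 * u ^ 3) * (u⁻¹ - u⁻¹ ^ 3 / 3 + u⁻¹ ^ 5 / 5 - u⁻¹ ^ 7 / 7) =
      4 / 3 + 5 * u ^ 2 - (4 / 35 * (1 / u ^ 4) + 3 / 7 * (1 / u ^ 6)) := by
    field_simp; ring
  have h4 : 1 / u ^ 4 ≤ 1 / u ^ 3 := one_div_pow_le_one_div_pow_of_le hu (by norm_num)
  have h6 : 1 / u ^ 6 ≤ 1 / u ^ 3 := one_div_pow_le_one_div_pow_of_le hu (by norm_num)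
  rw [abs_le]
  constructor <;> linarith

lemma abs_hfun_le_of_one_le {u : ℝ} (hu : 1 ≤ u) : |hfun u| ≤ 3 / u ^ 3 := by
  have hπ : 16 / (3 * π) ≤ 2 := by
    rw [div_le_iff₀ (by positivity)]; linarith [pi_gt_three]
  rw [hfun_eq_of_pos (by linarith)]
  calc _ ≤ 1 / u ^ 3 + 16 / (3 * π) * (1 / u ^ 3) := by
        refine (abs_add_le _ _).trans (add_le_add (abs_hfun_sqrt_part_le hu) ?_)
        rw [abs_mul, abs_of_pos (by positivity)]
        exact mul_le_mul_of_nonneg_left (abs_hfun_arctan_part_le hu) (by positivity)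
    _ ≤ 3 / u ^ 3 := by
        rw [show 3 / u ^ 3 = 1 / u ^ 3 + 2 * (1 / u ^ 3) by ring]
        gcongr

lemma exists_abs_hfun_le : ∃ C, ∀ u, |hfun u| ≤ C * (1 + u ^ 2) ^ (-(3 : ℝ) / 2) := by
  obtain ⟨C₀, hC₀⟩ := isCompact_Icc.exists_bound_of_continuousOn
    (continuous_hfun.continuousOn (s := Set.Icc (-1) 1))
  have hC₀0 : 0 ≤ C₀ := (norm_nonneg _).trans (hC₀ 0 (by norm_num))
  refine ⟨4 * C₀ + 12, fun u => ?_⟩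
  have hw : 0 < (1 + u ^ 2) * √(1 + u ^ 2) := by positivity
  rw [one_add_sq_rpow_neg_three_halves, ← div_eq_mul_inv, le_div_iff₀ hw]
  rcases le_total |u| 1 with hu | hu
  · have hbound : |hfun u| ≤ C₀ := hC₀ u (abs_le.1 hu)
    have : (1 + u ^ 2) * √(1 + u ^ 2) ≤ 4 := by
      have hsq : √(1 + u ^ 2) ≤ 2 := sqrt_le_iff.2 ⟨by norm_num, by nlinarith [abs_le.1 hu]⟩
      nlinarith [abs_le.1 hu]
    nlinarith [abs_nonneg (hfun u)]
  · have hbound : |hfun u| ≤ 3 / |u| ^ 3 := by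
      have heven : hfun |u| = hfun u := by
        rcases abs_choice u with h | h <;> rw [h]
        exact hfun_neg u
      rw [← heven]
      exact abs_hfun_le_of_one_le hu
    have hw4 : (1 + u ^ 2) * √(1 + u ^ 2) ≤ 4 * |u| ^ 3 := by
      have hsq : √(1 + u ^ 2) ≤ 2 * |u| := sqrt_le_iff.2 ⟨by positivity, by nlinarith [sq_abs u]⟩
      nlinarith [sq_abs u]
    calc |hfun u| * ((1 + u ^ 2) * √(1 + u ^ 2)) ≤ 3 / |u| ^ 3 * (4 * |u| ^ 3) :=
          mul_le_mul hbound hw4 hw.le (by positivity)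
      _ = 12 := by field_simp; norm_num
      _ ≤ 4 * C₀ + 12 := by linarith

lemma measurable_Iintegrand (n₁ n₂ : ℤ) (y : ℝ) : Measurable (Iintegrand n₁ n₂ y) := by
  unfold Iintegrand
  have := continuous_hfun.measurable
  fun_prop

lemma norm_Iintegrand (n₁ n₂ : ℤ) (y : ℝ) (p : ℝ × ℝ) :
    ‖Iintegrand n₁ n₂ y p‖ =
      |p.2 - p.1| ^ (-3 : ℤ) * |hfun ((p.1 * p.2 + 1) / (p.2 - p.1))| := by
  rw [Iintegrand, norm_mul, Complex.norm_exp, Complex.norm_real, Real.norm_eq_abs, abs_mul,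
    abs_of_nonneg (zpow_nonneg (abs_nonneg _) _)]
  simp

lemma norm_Iintegrand_ae_le {C : ℝ} (hC : ∀ u, |hfun u| ≤ C * (1 + u ^ 2) ^ (-(3 : ℝ) / 2))
    (n₁ n₂ : ℤ) (y : ℝ) :
    ∀ᵐ p : ℝ × ℝ, ‖Iintegrand n₁ n₂ y p‖ ≤
      C * ((1 + p.1 ^ 2) ^ (-(3 : ℝ) / 2) * (1 + p.2 ^ 2) ^ (-(3 : ℝ) / 2)) := by
  filter_upwards [ae_sub_ne_zero] with p hp
  rw [norm_Iintegrand, ← abs_sub_zpow_mul_rpow_eq hp, mul_left_comm]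
  exact mul_le_mul_of_nonneg_left (hC _) (zpow_nonneg (abs_nonneg _) _)

/-- (a) the comparison double integral converges and equals
`∫∫ (1+r₁²)^{−3/2}(1+r₂²)^{−3/2} = 4`; (b) the integrals `I(n̂₁,n̂₂;y)` converge
absolutely and are uniformly bounded. -/
theorem double_integral_bound :
    (Integrable (fun p : ℝ × ℝ =>
        |p.2 - p.1| ^ (-3 : ℤ) * (1 + ((p.1 * p.2 + 1) / (p.2 - p.1)) ^ 2) ^ (-(3 : ℝ) / 2)) ∧
      (∫ p : ℝ × ℝ,
          |p.2 - p.1| ^ (-3 : ℤ) * (1 + ((p.1 * p.2 + 1) / (p.2 - p.1)) ^ 2) ^ (-(3 : ℝ) / 2)) =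
        (∫ p : ℝ × ℝ, (1 + p.1 ^ 2) ^ (-(3 : ℝ) / 2) * (1 + p.2 ^ 2) ^ (-(3 : ℝ) / 2)) ∧
      (∫ p : ℝ × ℝ, (1 + p.1 ^ 2) ^ (-(3 : ℝ) / 2) * (1 + p.2 ^ 2) ^ (-(3 : ℝ) / 2)) = 4) ∧
    ((∀ (n₁ n₂ : ℤ) (y : ℝ), 0 < y → Integrable (Iintegrand n₁ n₂ y)) ∧
      ∃ B : ℝ, ∀ (n₁ n₂ : ℤ) (y : ℝ), 0 < y →
        ‖∫ p : ℝ × ℝ, Iintegrand n₁ n₂ y p‖ ≤ B) := by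
  have hG := integrable_one_add_sq_rpow_mul_one_add_sq_rpow
  have hkernel : (fun p : ℝ × ℝ =>
      |p.2 - p.1| ^ (-3 : ℤ) * (1 + ((p.1 * p.2 + 1) / (p.2 - p.1)) ^ 2) ^ (-(3 : ℝ) / 2))
      =ᵐ[volume] fun p => (1 + p.1 ^ 2) ^ (-(3 : ℝ) / 2) * (1 + p.2 ^ 2) ^ (-(3 : ℝ) / 2) := by
    filter_upwards [ae_sub_ne_zero] with p hp using abs_sub_zpow_mul_rpow_eq hp
  obtain ⟨C, hC⟩ := exists_abs_hfun_le
  refine ⟨⟨hG.congr hkernel.symm, integral_congr_ae hkernel,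
    integral_one_add_sq_rpow_mul_one_add_sq_rpow⟩,
    fun n₁ n₂ y _ => (hG.const_mul C).mono'
      (measurable_Iintegrand n₁ n₂ y).aestronglyMeasurable (norm_Iintegrand_ae_le hC n₁ n₂ y),
    C * 4, fun n₁ n₂ y _ => ?_⟩
  calc ‖∫ p, Iintegrand n₁ n₂ y p‖
      ≤ ∫ p : ℝ × ℝ, C * ((1 + p.1 ^ 2) ^ (-(3 : ℝ) / 2) * (1 + p.2 ^ 2) ^ (-(3 : ℝ) / 2)) :=
        norm_integral_le_of_norm_le (hG.const_mul C) (norm_Iintegrand_ae_le hC n₁ n₂ y)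
    _ = C * 4 := by rw [integral_const_mul, integral_one_add_sq_rpow_mul_one_add_sq_rpow]
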